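/- arXiv:0912.3726 — 2 statements merged into one kernel-verified Lean document; each statement's English description precedes it below -/
import Mathlib

section
/- Almost quarter-pinched Kähler curvature tensors are close to R₀: For every ε > 0 and n ≥ 2 there exists δ = δ(ε,n) > 0 such that any Kähler curvature tensor R on a 2n-dimensional real inner product space with almost complex structure, whose sectional curvatures satisfy -1-δ ≤ K ≤ -1/4, satisfies |R - R₀| < ε in the norm on ⊗⁴V*. -/
open RealInnerProductSpace

variable {V : Type*} [NormedAddCommGroup V] [InnerProductSpace ℝ V]

/-- A (Riemann) curvature tensor: a 4-linear map with the usual symmetries. -/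
structure IsCurvatureTensor (R : V → V → V → V → ℝ) : Prop where
  add1 : ∀ x x' y z w, R (x + x') y z w = R x y z w + R x' y z w
  smul1 : ∀ (c : ℝ) x y z w, R (c • x) y z w = c * R x y z w
  add2 : ∀ x y y' z w, R x (y + y') z w = R x y z w + R x y' z w
  smul2 : ∀ (c : ℝ) x y z w, R x (c • y) z w = c * R x y z w
  add3 : ∀ x y z z' w, R x y (z + z') w = R x y z w + R x y z' w
  smul3 : ∀ (c : ℝ) x y z w, R x y (c • z) w = c * R x y z w
  add4 : ∀ x y z w w', R x y z (w + w') = R x y z w + R x y z w'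
  smul4 : ∀ (c : ℝ) x y z w, R x y z (c • w) = c * R x y z w
  antisym1 : ∀ x y z w, R x y z w = -R y x z w
  antisym2 : ∀ x y z w, R x y z w = -R x y w z
  pairsym : ∀ x y z w, R z w x y = R x y z w
  bianchi : ∀ x y z w, R x y z w + R x w y z + R x z w y = 0

/-- A Kähler curvature tensor with respect to an almost complex structure `J`. -/
structure IsKahlerCurvatureTensor (J : V →ₗ[ℝ] V) (R : V → V → V → V → ℝ) : Prop where
  toCurv : IsCurvatureTensor R
  Jinv1 : ∀ x y z w, R (J x) (J y) z w = R x y z w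
  Jinv2 : ∀ x y z w, R x y (J z) (J w) = R x y z w

/-- The curvature tensor of complex hyperbolic space. -/
noncomputable def R0 (J : V →ₗ[ℝ] V) (u v z w : V) : ℝ :=
  -(1/4) * (⟪u, z⟫ * ⟪v, w⟫ - ⟪u, w⟫ * ⟪v, z⟫ + ⟪u, J z⟫ * ⟪v, J w⟫
    - ⟪u, J w⟫ * ⟪v, J z⟫ + 2 * ⟪u, J v⟫ * ⟪z, J w⟫)

/-- The holomorphic sectional curvature quantity `H(u) = R(u, Ju, u, Ju)`. -/
def Hol (J : V →ₗ[ℝ] V) (R : V → V → V → V → ℝ) (u : V) : ℝ := R u (J u) u (J u)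

/-- The norm on `⊗⁴ V*` induced by an orthonormal basis of `V`. -/
noncomputable def tensorNorm {ι : Type*} [Fintype ι] (b : OrthonormalBasis ι ℝ V)
    (T : V → V → V → V → ℝ) : ℝ :=
  Real.sqrt (∑ p : ι × ι × ι × ι, (T (b p.1) (b p.2.1) (b p.2.2.1) (b p.2.2.2)) ^ 2)


namespace IsCurvatureTensor
variable {S : V → V → V → V → ℝ}

lemma zero1 (hC : IsCurvatureTensor S) (y z w : V) : S 0 y z w = 0 := by
  have := hC.smul1 0 0 y z w; simpa using this

lemma neg1 (hC : IsCurvatureTensor S) (x y z w : V) : S (-x) y z w = -S x y z w := by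
  rw [← neg_one_smul ℝ x, hC.smul1]; ring

lemma neg2 (hC : IsCurvatureTensor S) (x y z w : V) : S x (-y) z w = -S x y z w := by
  rw [← neg_one_smul ℝ y, hC.smul2]; ring

lemma neg3 (hC : IsCurvatureTensor S) (x y z w : V) : S x y (-z) w = -S x y z w := by
  rw [← neg_one_smul ℝ z, hC.smul3]; ring

lemma neg4 (hC : IsCurvatureTensor S) (x y z w : V) : S x y z (-w) = -S x y z w := by
  rw [← neg_one_smul ℝ w, hC.smul4]; ring

lemma sub1 (hC : IsCurvatureTensor S) (x x' y z w : V) :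
    S (x - x') y z w = S x y z w - S x' y z w := by
  rw [sub_eq_add_neg, hC.add1, hC.neg1]; ring

lemma sub2 (hC : IsCurvatureTensor S) (x y y' z w : V) :
    S x (y - y') z w = S x y z w - S x y' z w := by
  rw [sub_eq_add_neg, hC.add2, hC.neg2]; ring

lemma sub3 (hC : IsCurvatureTensor S) (x y z z' w : V) :
    S x y (z - z') w = S x y z w - S x y z' w := by
  rw [sub_eq_add_neg, hC.add3, hC.neg3]; ring

lemma sub4 (hC : IsCurvatureTensor S) (x y z w w' : V) :
    S x y z (w - w') = S x y z w - S x y z w' := by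
  rw [sub_eq_add_neg, hC.add4, hC.neg4]; ring

end IsCurvatureTensor

namespace IsKahlerCurvatureTensor
variable {J : V →ₗ[ℝ] V} {S : V → V → V → V → ℝ}

lemma ks1 (h : IsKahlerCurvatureTensor J S) (hJ2 : ∀ v, J (J v) = -v) (a b : V) :
    S b (J a) b (J a) = S a (J b) a (J b) := by
  have e1 : J (-(J b)) = b := by rw [map_neg, hJ2, neg_neg]
  have h1 : S (J (-(J b))) (J a) b (J a) = S (-(J b)) a b (J a) := h.Jinv1 _ _ _ _
  rw [e1] at h1
  have h2 : S (-(J b)) a b (J a) = -S (J b) a b (J a) := h.toCurv.neg1 _ _ _ _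
  have h3 : S (J b) a (J (-(J b))) (J a) = S (J b) a (-(J b)) a := h.Jinv2 _ _ _ _
  rw [e1] at h3
  have h4 : S (J b) a (-(J b)) a = -S (J b) a (J b) a := h.toCurv.neg3 _ _ _ _
  have h5 : S (J b) a (J b) a = -S a (J b) (J b) a := h.toCurv.antisym1 _ _ _ _
  have h6 : S a (J b) (J b) a = -S a (J b) a (J b) := h.toCurv.antisym2 _ _ _ _
  linarith

lemma ks2 (h : IsKahlerCurvatureTensor J S) (hJ2 : ∀ v, J (J v) = -v) (a b : V) :
    S a (J b) b (J a) = S a (J b) a (J b) := by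
  have e1 : J (-(J b)) = b := by rw [map_neg, hJ2, neg_neg]
  have h1 : S a (J b) (J (-(J b))) (J a) = S a (J b) (-(J b)) a := h.Jinv2 _ _ _ _
  rw [e1] at h1
  have h2 : S a (J b) (-(J b)) a = -S a (J b) (J b) a := h.toCurv.neg3 _ _ _ _
  have h3 : S a (J b) (J b) a = -S a (J b) a (J b) := h.toCurv.antisym2 _ _ _ _
  linarith

lemma ks2' (h : IsKahlerCurvatureTensor J S) (hJ2 : ∀ v, J (J v) = -v) (a b : V) :
    S b (J a) a (J b) = S a (J b) a (J b) := by
  have h1 : S b (J a) a (J b) = S a (J b) b (J a) := h.toCurv.pairsym a (J b) b (J a)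
  rw [h1]; exact ks2 h hJ2 a b

lemma ks3 (h : IsKahlerCurvatureTensor J S) (hJ2 : ∀ v, J (J v) = -v) (a b : V) :
    S a (J a) b (J b) = S a b a b + S a (J b) a (J b) := by
  have hb := h.toCurv.bianchi a (J a) b (J b)
  have h1 : S a (J b) (J a) b = -S a (J b) b (J a) := h.toCurv.antisym2 _ _ _ _
  have h2 := ks2 h hJ2 a b
  have h3 : S a b (J b) (J a) = S a b b a := h.Jinv2 a b b a
  have h4 : S a b b a = -S a b a b := h.toCurv.antisym2 _ _ _ _
  linarith

lemma ks3' (h : IsKahlerCurvatureTensor J S) (hJ2 : ∀ v, J (J v) = -v) (a b : V) :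
    S b (J b) a (J a) = S a b a b + S a (J b) a (J b) := by
  rw [(h.toCurv.pairsym b (J b) a (J a)).symm]; exact ks3 h hJ2 a b

lemma hol_J (h : IsKahlerCurvatureTensor J S) (hJ2 : ∀ v, J (J v) = -v) (b : V) :
    Hol J S (J b) = Hol J S b := by
  simp only [Hol, hJ2, h.toCurv.neg2, h.toCurv.neg4, neg_neg]
  have h5 : S (J b) b (J b) b = -S b (J b) (J b) b := h.toCurv.antisym1 _ _ _ _
  have h6 : S b (J b) (J b) b = -S b (J b) b (J b) := h.toCurv.antisym2 _ _ _ _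
  linarith

lemma hol_smul (h : IsKahlerCurvatureTensor J S) (c : ℝ) (v : V) :
    Hol J S (c • v) = c^4 * Hol J S v := by
  simp only [Hol, map_smul, h.toCurv.smul1, h.toCurv.smul2, h.toCurv.smul3, h.toCurv.smul4]
  ring

lemma hol_zero (h : IsKahlerCurvatureTensor J S) : Hol J S 0 = 0 :=
  h.toCurv.zero1 _ _ _

lemma hol_I (h : IsKahlerCurvatureTensor J S) (hJ2 : ∀ v, J (J v) = -v) (a b : V) :
    Hol J S (a+b) + Hol J S (a-b)
      = 2 * Hol J S a + 2 * Hol J S b + 4 * S a b a b + 12 * S a (J b) a (J b) := by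
  have t13 := ks1 h hJ2 a b
  have t23 := ks2 h hJ2 a b
  have t14 := ks2' h hJ2 a b
  have t12 := ks3' h hJ2 a b
  have t34 := ks3 h hJ2 a b
  simp only [Hol, map_add, map_sub, h.toCurv.add1, h.toCurv.add2, h.toCurv.add3, h.toCurv.add4,
    h.toCurv.sub1, h.toCurv.sub2, h.toCurv.sub3, h.toCurv.sub4]
  linear_combination 2*t12 + 2*t13 + 2*t14 + 2*t23 + 2*t34

lemma hol_sum (h : IsKahlerCurvatureTensor J S) (hJ2 : ∀ v, J (J v) = -v) (a b : V) :
    Hol J S (a+b) + Hol J S (a-b) + Hol J S (a + J b) + Hol J S (a - J b)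
      = 4 * Hol J S a + 4 * Hol J S b
        + 16 * (S a b a b + S a (J b) a (J b)) := by
  have h1 := hol_I h hJ2 a b
  have h2 := hol_I h hJ2 a (J b)
  rw [hol_J h hJ2] at h2
  simp only [hJ2, h.toCurv.neg2, h.toCurv.neg4, neg_neg] at h2
  linarith

lemma star (h : IsKahlerCurvatureTensor J S) (hJ2 : ∀ v, J (J v) = -v) (a b : V) :
    32 * S a b a b = 3 * Hol J S (a + J b) + 3 * Hol J S (a - J b)
      - Hol J S (a+b) - Hol J S (a-b) - 4 * Hol J S a - 4 * Hol J S b := by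
  have h1 := hol_I h hJ2 a b
  have h2 := hol_I h hJ2 a (J b)
  rw [hol_J h hJ2] at h2
  simp only [hJ2, h.toCurv.neg2, h.toCurv.neg4, neg_neg] at h2
  linarith

end IsKahlerCurvatureTensor

section R0facts
variable {J : V →ₗ[ℝ] V}

lemma skewJ (hJ2 : ∀ v, J (J v) = -v) (hJi : ∀ v w : V, ⟪J v, J w⟫ = ⟪v, w⟫) (v w : V) :
    ⟪J v, w⟫ = -⟪v, J w⟫ := by
  have h := hJi v (J w)
  rw [hJ2, inner_neg_right] at h
  linarith

lemma skewJ' (hJ2 : ∀ v, J (J v) = -v) (hJi : ∀ v w : V, ⟪J v, J w⟫ = ⟪v, w⟫) (v w : V) :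
    ⟪v, J w⟫ = -⟪w, J v⟫ := by
  rw [real_inner_comm (J w) v]; exact skewJ hJ2 hJi w v

lemma selfJ (hJ2 : ∀ v, J (J v) = -v) (hJi : ∀ v w : V, ⟪J v, J w⟫ = ⟪v, w⟫) (v : V) :
    ⟪v, J v⟫ = 0 := by
  have h := skewJ' hJ2 hJi v v
  linarith

lemma r0_xyxy (hJ2 : ∀ v, J (J v) = -v) (hJi : ∀ v w : V, ⟪J v, J w⟫ = ⟪v, w⟫) (x y : V) :
    R0 J x y x y = -(1/4) * (⟪x,x⟫ * ⟪y,y⟫ - ⟪x,y⟫^2 + 3 * ⟪x, J y⟫^2) := by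
  have h1 := selfJ hJ2 hJi x
  have h2 := selfJ hJ2 hJi y
  have h3 := skewJ' hJ2 hJi y x
  have h4 := real_inner_comm y x
  simp only [R0]
  rw [h1, h2, h3, h4]
  ring
end R0facts


section R0kahler
variable {J : V →ₗ[ℝ] V}

lemma r0_add1 (x x' y z w : V) : R0 J (x + x') y z w = R0 J x y z w + R0 J x' y z w := by
  simp only [R0, map_add, inner_add_left, inner_add_right]; ring

lemma r0_smul1 (c : ℝ) (x y z w : V) : R0 J (c • x) y z w = c * R0 J x y z w := by
  simp only [R0, map_smul, real_inner_smul_left, real_inner_smul_right]; ring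

lemma r0_add2 (x y y' z w : V) : R0 J x (y + y') z w = R0 J x y z w + R0 J x y' z w := by
  simp only [R0, map_add, inner_add_left, inner_add_right]; ring

lemma r0_smul2 (c : ℝ) (x y z w : V) : R0 J x (c • y) z w = c * R0 J x y z w := by
  simp only [R0, map_smul, real_inner_smul_left, real_inner_smul_right]; ring

lemma r0_add3 (x y z z' w : V) : R0 J x y (z + z') w = R0 J x y z w + R0 J x y z' w := by
  simp only [R0, map_add, inner_add_left, inner_add_right]; ring

lemma r0_smul3 (c : ℝ) (x y z w : V) : R0 J x y (c • z) w = c * R0 J x y z w := by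
  simp only [R0, map_smul, real_inner_smul_left, real_inner_smul_right]; ring

lemma r0_add4 (x y z w w' : V) : R0 J x y z (w + w') = R0 J x y z w + R0 J x y z w' := by
  simp only [R0, map_add, inner_add_left, inner_add_right]; ring

lemma r0_smul4 (c : ℝ) (x y z w : V) : R0 J x y z (c • w) = c * R0 J x y z w := by
  simp only [R0, map_smul, real_inner_smul_left, real_inner_smul_right]; ring

lemma r0_kahler (hJ2 : ∀ v, J (J v) = -v) (hJi : ∀ v w : V, ⟪J v, J w⟫ = ⟪v, w⟫) :
    IsKahlerCurvatureTensor J (R0 (V := V) J) := by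
  have sk : ∀ v w : V, ⟪J v, w⟫ = -⟪v, J w⟫ := skewJ hJ2 hJi
  have sk' : ∀ v w : V, ⟪v, J w⟫ = -⟪w, J v⟫ := skewJ' hJ2 hJi
  refine ⟨⟨r0_add1, r0_smul1, r0_add2, r0_smul2, r0_add3, r0_smul3, r0_add4, r0_smul4,
    ?_, ?_, ?_, ?_⟩, ?_, ?_⟩
  · -- antisym1
    intro x y z w
    simp only [R0]
    rw [sk' y x]; ring
  · -- antisym2
    intro x y z w
    simp only [R0]
    rw [sk' w z]; ring
  · -- pairsym : R0 z w x y = R0 x y z w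
    intro x y z w
    simp only [R0]
    rw [sk' z x, sk' w y, sk' z y, sk' w x,
      real_inner_comm x z, real_inner_comm y w, real_inner_comm y z, real_inner_comm x w]
    ring
  · -- bianchi
    intro x y z w
    simp only [R0]
    rw [sk' w z, sk' w y, sk' z y,
      real_inner_comm z w, real_inner_comm y w, real_inner_comm y z]
    ring
  · -- Jinv1
    intro x y z w
    simp only [R0]
    rw [hJ2 y]
    simp only [inner_neg_right]
    rw [hJi x z, hJi x w, hJi y w, hJi y z, sk x z, sk x w, sk x y, sk y w, sk y z]
    ring
  · -- Jinv2
    intro x y z w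
    simp only [R0]
    rw [hJ2 z, hJ2 w]
    simp only [inner_neg_right]
    rw [sk z w]
    ring

end R0kahler



section SubKahler
variable {J : V →ₗ[ℝ] V} {S1 S2 : V → V → V → V → ℝ}

lemma kahler_sub (h1 : IsKahlerCurvatureTensor J S1) (h2 : IsKahlerCurvatureTensor J S2) :
    IsKahlerCurvatureTensor J (fun x y z w => S1 x y z w - S2 x y z w) := by
  refine ⟨⟨?_, ?_, ?_, ?_, ?_, ?_, ?_, ?_, ?_, ?_, ?_, ?_⟩, ?_, ?_⟩
  · intro x x' y z w
    rw [h1.toCurv.add1, h2.toCurv.add1]; ring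
  · intro c x y z w
    rw [h1.toCurv.smul1, h2.toCurv.smul1]; ring
  · intro x y y' z w
    rw [h1.toCurv.add2, h2.toCurv.add2]; ring
  · intro c x y z w
    rw [h1.toCurv.smul2, h2.toCurv.smul2]; ring
  · intro x y z z' w
    rw [h1.toCurv.add3, h2.toCurv.add3]; ring
  · intro c x y z w
    rw [h1.toCurv.smul3, h2.toCurv.smul3]; ring
  · intro x y z w w'
    rw [h1.toCurv.add4, h2.toCurv.add4]; ring
  · intro c x y z w
    rw [h1.toCurv.smul4, h2.toCurv.smul4]; ring
  · intro x y z w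
    rw [h1.toCurv.antisym1 x y, h2.toCurv.antisym1 x y]; ring
  · intro x y z w
    rw [h1.toCurv.antisym2 x y z w, h2.toCurv.antisym2 x y z w]; ring
  · intro x y z w
    rw [h1.toCurv.pairsym x y z w, h2.toCurv.pairsym x y z w]
  · intro x y z w
    have a := h1.toCurv.bianchi x y z w
    have b := h2.toCurv.bianchi x y z w
    linarith
  · intro x y z w
    rw [h1.Jinv1, h2.Jinv1]
  · intro x y z w
    rw [h1.Jinv2, h2.Jinv2]

end SubKahler


section ExistsOrth
variable {J : V →ₗ[ℝ] V}

lemma exists_orth [FiniteDimensional ℝ V] (J : V →ₗ[ℝ] V) (hdim : 4 ≤ Module.finrank ℝ V)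
    (u : V) (hu : u ≠ 0) (hJu : J u ≠ 0) :
    ∃ z : V, ‖z‖ = 1 ∧ ⟪u, z⟫ = 0 ∧ ⟪J u, z⟫ = 0 := by
  set K := (ℝ ∙ u) ⊔ (ℝ ∙ (J u)) with hK
  have hKrank : Module.finrank ℝ K ≤ 2 := by
    have h := Submodule.finrank_sup_add_finrank_inf_eq (ℝ ∙ u) (ℝ ∙ (J u))
    rw [finrank_span_singleton hu, finrank_span_singleton hJu, ← hK] at h
    omega
  have hne : Kᗮ ≠ ⊥ := by
    intro hbot
    have h := Submodule.finrank_add_finrank_orthogonal K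
    rw [hbot, finrank_bot, add_zero] at h
    omega
  obtain ⟨w, hwK, hw0⟩ := Submodule.exists_mem_ne_zero_of_ne_bot hne
  have hwn : ‖(‖w‖⁻¹ • w : V)‖ = 1 := by
    rw [norm_smul, norm_inv, norm_norm, inv_mul_cancel₀ (norm_ne_zero_iff.mpr hw0)]
  have hmemu : u ∈ K := Submodule.mem_sup_left (Submodule.mem_span_singleton_self u)
  have hmemJu : J u ∈ K := Submodule.mem_sup_right (Submodule.mem_span_singleton_self (J u))
  have h1 := (Submodule.mem_orthogonal K w).mp hwK u hmemu
  have h2 := (Submodule.mem_orthogonal K w).mp hwK (J u) hmemJu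
  exact ⟨‖w‖⁻¹ • w, hwn, by rw [real_inner_smul_right, h1, mul_zero],
    by rw [real_inner_smul_right, h2, mul_zero]⟩

end ExistsOrth

set_option maxHeartbeats 4000000 in
theorem statement13 : ∀ ε : ℝ, 0 < ε → ∀ n : ℕ, 2 ≤ n → ∃ δ : ℝ, 0 < δ ∧
    ∀ (V : Type) [NormedAddCommGroup V] [InnerProductSpace ℝ V],
    ∀ (b : OrthonormalBasis (Fin (2 * n)) ℝ V) (J : V →ₗ[ℝ] V),
      (∀ v, J (J v) = -v) → (∀ v w : V, ⟪J v, J w⟫ = ⟪v, w⟫) →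
      ∀ R : V → V → V → V → ℝ, IsKahlerCurvatureTensor J R →
      (∀ x y : V, ‖x‖ = 1 → ‖y‖ = 1 → ⟪x, y⟫ = 0 →
        -1 - δ ≤ R x y x y ∧ R x y x y ≤ -(1/4)) →
      tensorNorm b (fun x y z w => R x y z w - R0 J x y z w) < ε := by
  intro ε hε n hn
  have hn2 : (2:ℝ) ≤ (n:ℝ) := by exact_mod_cast hn
  have hnpos : (0:ℝ) < (n:ℝ)^2 := by nlinarith
  refine ⟨ε / (7000 * (n:ℝ)^2), div_pos hε (by nlinarith), ?_⟩
  intro V _ _ b J hJ2 hJi R hR hpin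
  set δ := ε / (7000 * (n:ℝ)^2) with hδdef
  have hδpos : 0 < δ := div_pos hε (by nlinarith)
  have hC := hR.toCurv
  have sk := skewJ hJ2 hJi
  have sk' := skewJ' hJ2 hJi
  have hself := selfJ hJ2 hJi
  have hnormJ : ∀ v : V, ‖J v‖ = ‖v‖ := by
    intro v
    have h := hJi v v
    rw [real_inner_self_eq_norm_sq, real_inner_self_eq_norm_sq] at h
    nlinarith [norm_nonneg (J v), norm_nonneg v]
  have hR0K := r0_kahler hJ2 hJi
  set S : V → V → V → V → ℝ := fun x y z w => R x y z w - R0 J x y z w with hSdef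
  have hS : IsKahlerCurvatureTensor J S := kahler_sub hR hR0K
  have hSC := hS.toCurv
  haveI finV : FiniteDimensional ℝ V := Module.Finite.of_basis b.toBasis
  have hrank : Module.finrank ℝ V = 2*n := by
    rw [Module.finrank_eq_card_basis b.toBasis, Fintype.card_fin]
  -- pinching for general orthogonal pairs
  have pin2 : ∀ a c : V, ⟪a,c⟫ = 0 →
      ((-1-δ) * (‖a‖^2*‖c‖^2) ≤ R a c a c ∧ R a c a c ≤ -(1/4) * (‖a‖^2*‖c‖^2)) := by
    intro a c hac
    rcases eq_or_ne a 0 with rfl|ha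
    · simp only [hC.zero1, norm_zero]
      norm_num
    rcases eq_or_ne c 0 with rfl|hc
    · have hz0 : R a 0 a 0 = 0 := by
        have h := hC.smul2 (0:ℝ) a (0:V) a (0:V)
        simpa using h
      simp only [hz0, norm_zero]
      norm_num
    have ha' : ‖a‖ ≠ 0 := norm_ne_zero_iff.mpr ha
    have hc' : ‖c‖ ≠ 0 := norm_ne_zero_iff.mpr hc
    have ha1 : ‖(‖a‖⁻¹ • a : V)‖ = 1 := by
      rw [norm_smul, norm_inv, norm_norm, inv_mul_cancel₀ ha']
    have hc1 : ‖(‖c‖⁻¹ • c : V)‖ = 1 := by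
      rw [norm_smul, norm_inv, norm_norm, inv_mul_cancel₀ hc']
    have hip : ⟪(‖a‖⁻¹ • a : V), (‖c‖⁻¹ • c : V)⟫ = 0 := by
      rw [real_inner_smul_left, real_inner_smul_right, hac]; ring
    have hp := hpin _ _ ha1 hc1 hip
    have e1 : a = ‖a‖ • (‖a‖⁻¹ • a) := (smul_inv_smul₀ ha' a).symm
    have e2 : c = ‖c‖ • (‖c‖⁻¹ • c) := (smul_inv_smul₀ hc' c).symm
    have key : R a c a c = (‖a‖^2 * ‖c‖^2) * R (‖a‖⁻¹ • a) (‖c‖⁻¹ • c) (‖a‖⁻¹ • a) (‖c‖⁻¹ • c) := by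
      conv_lhs => rw [e1, e2]
      rw [hC.smul1, hC.smul2, hC.smul3, hC.smul4]
      ring
    have hP : (0:ℝ) ≤ ‖a‖^2*‖c‖^2 := by positivity
    constructor
    · rw [key]; nlinarith [hp.1, hP]
    · rw [key]; nlinarith [hp.2, hP]
  -- Hol S lower bound
  have hQlow : ∀ v : V, -δ * (‖v‖^2)^2 ≤ Hol J S v := by
    intro v
    have h0 := hself v
    have h1 := (pin2 v (J v) h0).1
    have h2 : R0 J v (J v) v (J v) = -((‖v‖^2)^2) := by
      rw [r0_xyxy hJ2 hJi v (J v), hJi v v, h0, hJ2 v, inner_neg_right,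
        real_inner_self_eq_norm_sq]
      ring
    have h3 : Hol J S v = R v (J v) v (J v) - R0 J v (J v) v (J v) := by
      simp only [Hol, hSdef]
    rw [h3, h2]
    rw [hnormJ v] at h1
    have e : ‖v‖^2*‖v‖^2 = (‖v‖^2)^2 := by ring
    rw [e] at h1
    linarith
  -- S a c a c nonpositive on complex-orthogonal pairs
  have hAup : ∀ a c : V, ⟪a,c⟫ = 0 → ⟪a, J c⟫ = 0 → S a c a c ≤ 0 := by
    intro a c h1 h2
    have h3 := (pin2 a c h1).2
    have h4 : R0 J a c a c = -(1/4) * (‖a‖^2*‖c‖^2) := by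
      rw [r0_xyxy hJ2 hJi a c, h1, h2, real_inner_self_eq_norm_sq, real_inner_self_eq_norm_sq]
      ring
    simp only [hSdef]
    linarith
  -- existence of complex-orthogonal direction
  have hexz : ∀ u : V, ‖u‖ = 1 → ∃ z : V, ‖z‖ = 1 ∧ ⟪u, z⟫ = 0 ∧ ⟪J u, z⟫ = 0 := by
    intro u hu
    have hu0 : u ≠ 0 := by
      intro h; rw [h, norm_zero] at hu; norm_num at hu
    have hJu0 : J u ≠ 0 := by
      intro h
      have := hnormJ u
      rw [h, norm_zero, hu] at this
      norm_num at this
    exact exists_orth J (by rw [hrank]; omega) u hu0 hJu0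
  -- Hol S upper bound on unit vectors
  have hQup1 : ∀ u : V, ‖u‖ = 1 → Hol J S u ≤ 5*δ := by
    intro u hu
    obtain ⟨z, hz, huz, hJuz⟩ := hexz u hu
    have iuu : ⟪u,u⟫ = (1:ℝ) := by rw [real_inner_self_eq_norm_sq, hu]; norm_num
    have izz : ⟪z,z⟫ = (1:ℝ) := by rw [real_inner_self_eq_norm_sq, hz]; norm_num
    have iJuJu : ⟪J u, J u⟫ = (1:ℝ) := by rw [hJi]; exact iuu
    have iJzJz : ⟪J z, J z⟫ = (1:ℝ) := by rw [hJi]; exact izz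
    have iuJu : ⟪u, J u⟫ = 0 := hself u
    have iJuu : ⟪J u, u⟫ = 0 := (real_inner_comm u (J u)).trans iuJu
    have izJz : ⟪z, J z⟫ = 0 := hself z
    have iJzz : ⟪J z, z⟫ = 0 := (real_inner_comm z (J z)).trans izJz
    have iuz : ⟪u, z⟫ = 0 := huz
    have izu : ⟪z, u⟫ = 0 := (real_inner_comm u z).trans huz
    have iJuz : ⟪J u, z⟫ = 0 := hJuz
    have izJu : ⟪z, J u⟫ = 0 := (real_inner_comm (J u) z).trans hJuz
    have iuJz : ⟪u, J z⟫ = 0 := by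
      have h := sk' u z
      rw [izJu] at h
      simpa using h
    have iJzu : ⟪J z, u⟫ = 0 := (real_inner_comm u (J z)).trans iuJz
    have iJuJz : ⟪J u, J z⟫ = 0 := by rw [hJi]; exact iuz
    have iJzJu : ⟪J z, J u⟫ = 0 := by rw [hJi]; exact izu
    have E0 := hS.hol_sum hJ2 u z
    have E1 := hS.hol_sum hJ2 (u+z) (u-z)
    have E2 := hS.hol_sum hJ2 (u + J z) (u - J z)
    have m1 : u + z + (u - z) = (2:ℝ) • u := by module
    have m2 : u + z - (u - z) = (2:ℝ) • z := by module
    have mJ1 : J (u - z) = J u - J z := map_sub J u z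
    rw [m1, m2, mJ1, hS.hol_smul, hS.hol_smul] at E1
    have m3 : u + J z + (u - J z) = (2:ℝ) • u := by module
    have m4 : u + J z - (u - J z) = (2:ℝ) • (J z) := by module
    have mJ2 : J (u - J z) = J u + z := by rw [map_sub, hJ2 z, sub_neg_eq_add]
    rw [m3, m4, mJ2, hS.hol_smul, hS.hol_smul, hS.hol_J hJ2] at E2
    norm_num at E1 E2
    have hA0 : S u z u z ≤ 0 := hAup u z iuz iuJz
    have hB0 : S u (J z) u (J z) ≤ 0 := by
      apply hAup u (J z) iuJz
      rw [hJ2 z, inner_neg_right, iuz, neg_zero]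
    have hA1 : S (u+z) (u-z) (u+z) (u-z) ≤ 0 := by
      apply hAup
      · simp only [inner_add_left, inner_sub_right, iuu, izz, iuz, izu]; ring
      · rw [mJ1]
        simp only [inner_add_left, inner_sub_right, iuJu, iuJz, izJu, izJz]; ring
    have hB1 : S (u+z) (J u - J z) (u+z) (J u - J z) ≤ 0 := by
      apply hAup
      · simp only [inner_add_left, inner_sub_right, iuJu, iuJz, izJu, izJz]; ring
      · rw [map_sub, hJ2 u, hJ2 z]
        simp only [inner_add_left, inner_sub_right, inner_neg_right, iuu, iuz, izu, izz]; ring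
    have hA2 : S (u+J z) (u-J z) (u+J z) (u-J z) ≤ 0 := by
      apply hAup
      · simp only [inner_add_left, inner_sub_right, iuu, iuJz, iJzu, iJzJz]; ring
      · rw [mJ2]
        simp only [inner_add_left, inner_add_right, iuJu, iuz, iJzJu, iJzz]; ring
    have hB2 : S (u+J z) (J u + z) (u+J z) (J u + z) ≤ 0 := by
      apply hAup
      · simp only [inner_add_left, inner_add_right, iuJu, iuz, iJzJu, iJzz]; ring
      · rw [map_add, hJ2 u]
        simp only [inner_add_left, inner_add_right, inner_neg_right, iuu, iuJz, iJzu, iJzJz]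
        ring
    have hzlow : -δ ≤ Hol J S z := by
      have h := hQlow z
      rw [hz] at h
      norm_num at h
      exact h
    have wbound : ∀ w : V, ⟪w,w⟫ = 4 → -(16*δ) ≤ Hol J S w := by
      intro w hw
      have h := hQlow w
      rw [← real_inner_self_eq_norm_sq, hw] at h
      norm_num at h
      linarith
    have hW1 : -(16*δ) ≤ Hol J S (u + z + (J u - J z)) := by
      apply wbound
      simp only [inner_add_left, inner_add_right, inner_sub_left, inner_sub_right,
        iuu, izz, iJuJu, iJzJz, iuz, izu, iuJu, iJuu, iuJz, iJzu, izJu, iJuz, izJz, iJzz,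
        iJuJz, iJzJu]
      norm_num
    have hW2 : -(16*δ) ≤ Hol J S (u + z - (J u - J z)) := by
      apply wbound
      simp only [inner_add_left, inner_add_right, inner_sub_left, inner_sub_right,
        iuu, izz, iJuJu, iJzJz, iuz, izu, iuJu, iJuu, iuJz, iJzu, izJu, iJuz, izJz, iJzz,
        iJuJz, iJzJu]
      norm_num
    have hW3 : -(16*δ) ≤ Hol J S (u + J z + (J u + z)) := by
      apply wbound
      simp only [inner_add_left, inner_add_right, inner_sub_left, inner_sub_right,
        iuu, izz, iJuJu, iJzJz, iuz, izu, iuJu, iJuu, iuJz, iJzu, izJu, iJuz, izJz, iJzz,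
        iJuJz, iJzJu]
      norm_num
    have hW4 : -(16*δ) ≤ Hol J S (u + J z - (J u + z)) := by
      apply wbound
      simp only [inner_add_left, inner_add_right, inner_sub_left, inner_sub_right,
        iuu, izz, iJuJu, iJzJz, iuz, izu, iuJu, iJuu, iuJz, iJzu, izJu, iJuz, izJz, iJzz,
        iJuJz, iJzJu]
      norm_num
    linarith
  -- absolute bound on Hol
  have hQabs : ∀ v : V, |Hol J S v| ≤ 5*δ*(‖v‖^2)^2 := by
    intro v
    rcases eq_or_ne v 0 with rfl|hv
    · rw [hS.hol_zero]
      simp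
    · have hv' : ‖v‖ ≠ 0 := norm_ne_zero_iff.mpr hv
      have hv1 : ‖(‖v‖⁻¹ • v : V)‖ = 1 := by
        rw [norm_smul, norm_inv, norm_norm, inv_mul_cancel₀ hv']
      have hup := hQup1 _ hv1
      have hlo := hQlow (‖v‖⁻¹ • v)
      rw [hv1] at hlo
      norm_num at hlo
      have e : ‖v‖ • (‖v‖⁻¹ • v) = v := smul_inv_smul₀ hv' v
      have key : Hol J S v = ‖v‖^4 * Hol J S (‖v‖⁻¹ • v) := by
        conv_lhs => rw [← e]
        rw [hS.hol_smul]
      rw [key, abs_mul, abs_of_nonneg (pow_nonneg (norm_nonneg v) 4)]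
      have habs : |Hol J S (‖v‖⁻¹ • v)| ≤ 5*δ := abs_le.mpr ⟨by linarith, hup⟩
      calc ‖v‖^4 * |Hol J S (‖v‖⁻¹ • v)| ≤ ‖v‖^4 * (5*δ) :=
            mul_le_mul_of_nonneg_left habs (pow_nonneg (norm_nonneg v) 4)
        _ = 5*δ*(‖v‖^2)^2 := by ring
  -- bound on S a c a c for vectors of norm ≤ 2
  have hBf : ∀ a c : V, ‖a‖ ≤ 2 → ‖c‖ ≤ 2 → |S a c a c| ≤ 340*δ := by
    intro a c ha hc
    have hst := hS.star hJ2 a c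
    have bnd : ∀ v : V, ‖v‖ ≤ 4 → |Hol J S v| ≤ 1280*δ := by
      intro v hv
      have h := hQabs v
      have h1 : ‖v‖^2 ≤ 16 := by nlinarith [norm_nonneg v]
      have h2 : (‖v‖^2)^2 ≤ 256 := by nlinarith [sq_nonneg (‖v‖^2), norm_nonneg v]
      have h3 : (0:ℝ) ≤ δ * (256 - (‖v‖^2)^2) := mul_nonneg hδpos.le (by linarith)
      linarith
    have b1 := bnd (a + J c) (by
      calc ‖a + J c‖ ≤ ‖a‖ + ‖J c‖ := norm_add_le _ _
        _ ≤ 4 := by rw [hnormJ]; linarith)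
    have b2 := bnd (a - J c) (by
      calc ‖a - J c‖ ≤ ‖a‖ + ‖J c‖ := norm_sub_le _ _
        _ ≤ 4 := by rw [hnormJ]; linarith)
    have b3 := bnd (a + c) (by
      calc ‖a + c‖ ≤ ‖a‖ + ‖c‖ := norm_add_le _ _
        _ ≤ 4 := by linarith)
    have b4 := bnd (a - c) (by
      calc ‖a - c‖ ≤ ‖a‖ + ‖c‖ := norm_sub_le _ _
        _ ≤ 4 := by linarith)
    have b5 : |Hol J S a| ≤ 80*δ := by
      have h := hQabs a
      have h1 : ‖a‖^2 ≤ 4 := by nlinarith [norm_nonneg a]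
      have h2 : (‖a‖^2)^2 ≤ 16 := by nlinarith [sq_nonneg (‖a‖^2), norm_nonneg a]
      have h3 : (0:ℝ) ≤ δ * (16 - (‖a‖^2)^2) := mul_nonneg hδpos.le (by linarith)
      linarith
    have b6 : |Hol J S c| ≤ 80*δ := by
      have h := hQabs c
      have h1 : ‖c‖^2 ≤ 4 := by nlinarith [norm_nonneg c]
      have h2 : (‖c‖^2)^2 ≤ 16 := by nlinarith [sq_nonneg (‖c‖^2), norm_nonneg c]
      have h3 : (0:ℝ) ≤ δ * (16 - (‖c‖^2)^2) := mul_nonneg hδpos.le (by linarith)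
      linarith
    rw [abs_le] at b1 b2 b3 b4 b5 b6 ⊢
    constructor <;> linarith [hst, b1.1, b1.2, b2.1, b2.2, b3.1, b3.2, b4.1, b4.2, b5.1, b5.2, b6.1, b6.2]
  -- bound on S x y z y
  have hP : ∀ x z y : V, ‖x‖ = 1 → ‖z‖ = 1 → ‖y‖ ≤ 2 → |S x y z y| ≤ 510*δ := by
    intro x z y hx hz hy
    have hexp : S (x+z) y (x+z) y = S x y x y + S z y z y + 2 * S x y z y := by
      rw [hSC.add1, hSC.add3, hSC.add3, hSC.pairsym x y z y]
      ring
    have b1 := hBf (x+z) y (by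
      calc ‖x + z‖ ≤ ‖x‖ + ‖z‖ := norm_add_le _ _
        _ ≤ 2 := by rw [hx, hz]; norm_num) hy
    have b2 := hBf x y (by rw [hx]; norm_num) hy
    have b3 := hBf z y (by rw [hz]; norm_num) hy
    rw [abs_le] at b1 b2 b3 ⊢
    constructor <;> [linarith [hexp, b1.1, b2.2, b3.2, b1.2, b2.1, b3.1];
      linarith [hexp, b1.1, b2.2, b3.2, b1.2, b2.1, b3.1]]
  -- bound on general components
  have hcomp : ∀ x y z w : V, ‖x‖=1 → ‖y‖=1 → ‖z‖=1 → ‖w‖=1 → |S x y z w| ≤ 1530*δ := by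
    intro x y z w hx hy hz hw
    have hF : S x (y+w) z (y+w) = S x y z y + S x w z w + (S x y z w + S x w z y) := by
      rw [hSC.add2, hSC.add4, hSC.add4]
      ring
    have hG : S x (z+w) y (z+w) = S x z y z + S x w y w + (S x z y w + S x w y z) := by
      rw [hSC.add2, hSC.add4, hSC.add4]
      ring
    have hrec : 3 * S x y z w = 2*(S x y z w + S x w z y) + (S x z y w + S x w y z) := by
      have hb := hSC.bianchi x y z w
      have a1 := hSC.antisym2 x w y z
      have a2 := hSC.antisym2 x z y w
      linarith
    have p1 := hP x z (y+w) hx hz (by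
      calc ‖y + w‖ ≤ ‖y‖ + ‖w‖ := norm_add_le _ _
        _ ≤ 2 := by rw [hy, hw]; norm_num)
    have p2 := hP x z y hx hz (by rw [hy]; norm_num)
    have p3 := hP x z w hx hz (by rw [hw]; norm_num)
    have p4 := hP x y (z+w) hx hy (by
      calc ‖z + w‖ ≤ ‖z‖ + ‖w‖ := norm_add_le _ _
        _ ≤ 2 := by rw [hz, hw]; norm_num)
    have p5 := hP x y z hx hy (by rw [hz]; norm_num)
    have p6 := hP x y w hx hy (by rw [hw]; norm_num)
    rw [abs_le] at p1 p2 p3 p4 p5 p6 ⊢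
    constructor <;> [linarith [hF, hG, hrec, p1.1, p1.2, p2.1, p2.2, p3.1, p3.2, p4.1, p4.2, p5.1, p5.2, p6.1, p6.2];
      linarith [hF, hG, hrec, p1.1, p1.2, p2.1, p2.2, p3.1, p3.2, p4.1, p4.2, p5.1, p5.2, p6.1, p6.2]]
  -- conclude
  show Real.sqrt (∑ p : Fin (2*n) × Fin (2*n) × Fin (2*n) × Fin (2*n),
      (S (b p.1) (b p.2.1) (b p.2.2.1) (b p.2.2.2))^2) < ε
  rw [Real.sqrt_lt' hε]
  have hterm : ∀ p : Fin (2*n) × Fin (2*n) × Fin (2*n) × Fin (2*n),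
      (S (b p.1) (b p.2.1) (b p.2.2.1) (b p.2.2.2))^2 ≤ (1530*δ)^2 := by
    intro p
    have h := hcomp (b p.1) (b p.2.1) (b p.2.2.1) (b p.2.2.2)
      (b.orthonormal.1 p.1) (b.orthonormal.1 p.2.1) (b.orthonormal.1 p.2.2.1)
      (b.orthonormal.1 p.2.2.2)
    have h' := abs_le.mp h
    exact sq_le_sq' h'.1 h'.2
  have hsum : ∑ p : Fin (2*n) × Fin (2*n) × Fin (2*n) × Fin (2*n),
      (S (b p.1) (b p.2.1) (b p.2.2.1) (b p.2.2.2))^2 ≤ (2*(n:ℝ))^4 * (1530*δ)^2 := by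
    have h := Finset.sum_le_card_nsmul Finset.univ
      (fun p : Fin (2*n) × Fin (2*n) × Fin (2*n) × Fin (2*n) =>
        (S (b p.1) (b p.2.1) (b p.2.2.1) (b p.2.2.2))^2) ((1530*δ)^2)
      (fun p _ => hterm p)
    rw [Finset.card_univ] at h
    have hcard : (Fintype.card (Fin (2*n) × Fin (2*n) × Fin (2*n) × Fin (2*n))) = (2*n)^4 := by
      simp [Fintype.card_prod, Fintype.card_fin]
      ring
    rw [hcard, nsmul_eq_mul] at h
    calc ∑ p : Fin (2*n) × Fin (2*n) × Fin (2*n) × Fin (2*n),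
        (S (b p.1) (b p.2.1) (b p.2.2.1) (b p.2.2.2))^2 ≤ ((2*n)^4 : ℕ) * (1530*δ)^2 := h
      _ = (2*(n:ℝ))^4 * (1530*δ)^2 := by push_cast; ring
  have hfin : (2*(n:ℝ))^4 * (1530*δ)^2 < ε^2 := by
    have hne : (n:ℝ) ≠ 0 := by positivity
    have heq : (2*(n:ℝ))^4 * (1530*δ)^2 = (37454400/49000000) * ε^2 := by
      rw [hδdef]
      field_simp
      ring
    rw [heq]
    nlinarith [mul_pos hε hε]
  linarith
end

section
/- Holomorphic pinching implies closeness to R₀: For every ε > 0 and n ≥ 1 there exists η = η(ε,n) > 0 such that if R is a Kähler curvature tensor on a 2n-dimensional real inner product space with |R(u,J(u),u,J(u)) + 1| < η for all unit vectors u, then |R - R₀| < ε. -/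
open RealInnerProductSpace

variable {V : Type*} [NormedAddCommGroup V] [InnerProductSpace ℝ V]

/-! ### Auxiliary lemmas -/

lemma skw {J : V →ₗ[ℝ] V} (hJ2 : ∀ v, J (J v) = -v) (hJi : ∀ v w : V, ⟪J v, J w⟫ = ⟪v, w⟫)
    (a b : V) : ⟪a, J b⟫ = -⟪b, J a⟫ := by
  have h := hJi b (J a); rw [hJ2, inner_neg_right] at h
  rw [real_inner_comm (J b) a]; linarith

lemma skw2 {J : V →ₗ[ℝ] V} (hJ2 : ∀ v, J (J v) = -v) (hJi : ∀ v w : V, ⟪J v, J w⟫ = ⟪v, w⟫)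
    (a b : V) : ⟪J a, b⟫ = -⟪a, J b⟫ := by
  have h1 := skw hJ2 hJi b a
  have h2 := real_inner_comm (J a) b
  linarith

lemma normJ {J : V →ₗ[ℝ] V} (hJi : ∀ v w : V, ⟪J v, J w⟫ = ⟪v, w⟫) (c : V) :
    ‖J c‖ = ‖c‖ := by
  have h : ‖J c‖^2 = ‖c‖^2 := by
    rw [← real_inner_self_eq_norm_sq, ← real_inner_self_eq_norm_sq, hJi]
  rw [← Real.sqrt_sq (norm_nonneg (J c)), ← Real.sqrt_sq (norm_nonneg c), h]

/-- `R0` is a Kähler curvature tensor. -/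
lemma R0_kahler {J : V →ₗ[ℝ] V} (hJ2 : ∀ v, J (J v) = -v)
    (hJi : ∀ v w : V, ⟪J v, J w⟫ = ⟪v, w⟫) : IsKahlerCurvatureTensor J (R0 J) := by
  refine ⟨⟨?_, ?_, ?_, ?_, ?_, ?_, ?_, ?_, ?_, ?_, ?_, ?_⟩, ?_, ?_⟩
  · intro x x' y z w
    simp only [R0, inner_add_left, inner_add_right, map_add]; ring
  · intro c x y z w
    simp only [R0, real_inner_smul_left, real_inner_smul_right, map_smul]; ring
  · intro x y y' z w
    simp only [R0, inner_add_left, inner_add_right, map_add]; ring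
  · intro c x y z w
    simp only [R0, real_inner_smul_left, real_inner_smul_right, map_smul]; ring
  · intro x y z z' w
    simp only [R0, inner_add_left, inner_add_right, map_add]; ring
  · intro c x y z w
    simp only [R0, real_inner_smul_left, real_inner_smul_right, map_smul]; ring
  · intro x y z w w'
    simp only [R0, inner_add_left, inner_add_right, map_add]; ring
  · intro c x y z w
    simp only [R0, real_inner_smul_left, real_inner_smul_right, map_smul]; ring
  · intro x y z w
    simp only [R0]; rw [skw hJ2 hJi y x]; ring
  · intro x y z w
    simp only [R0]; rw [skw hJ2 hJi w z]; ring
  · intro x y z w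
    simp only [R0]
    rw [skw hJ2 hJi z x, skw hJ2 hJi w y, skw hJ2 hJi z y, skw hJ2 hJi w x,
      real_inner_comm x z, real_inner_comm y w, real_inner_comm y z, real_inner_comm x w,
      skw hJ2 hJi z w]
    ring
  · intro x y z w
    simp only [R0]
    rw [real_inner_comm y w, real_inner_comm z w, real_inner_comm y z,
      skw hJ2 hJi w y, skw hJ2 hJi z w, skw hJ2 hJi z y]
    ring
  · intro x y z w
    simp only [R0, hJi, hJ2, map_neg, inner_neg_right, skw2 hJ2 hJi]; ring
  · intro x y z w
    simp only [R0, hJi, hJ2, map_neg, inner_neg_right, skw2 hJ2 hJi]; ring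

lemma R0_hol {J : V →ₗ[ℝ] V} (hJ2 : ∀ v, J (J v) = -v)
    (hJi : ∀ v w : V, ⟪J v, J w⟫ = ⟪v, w⟫) (p : V) :
    R0 J p (J p) p (J p) = -‖p‖^4 := by
  have h0 : ⟪p, J p⟫ = 0 := by have := skw hJ2 hJi p p; linarith
  simp only [R0, hJi, hJ2, map_neg, inner_neg_right, h0, real_inner_self_eq_norm_sq]
  ring

/-- Difference of Kähler curvature tensors is a Kähler curvature tensor. -/
lemma kahler_sub_s14 {J : V →ₗ[ℝ] V} {R S : V → V → V → V → ℝ}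
    (hR : IsKahlerCurvatureTensor J R) (hS : IsKahlerCurvatureTensor J S) :
    IsKahlerCurvatureTensor J (fun x y z w => R x y z w - S x y z w) := by
  refine ⟨⟨?_, ?_, ?_, ?_, ?_, ?_, ?_, ?_, ?_, ?_, ?_, ?_⟩, ?_, ?_⟩
  · intro x x' y z w; rw [hR.toCurv.add1, hS.toCurv.add1]; ring
  · intro c x y z w; rw [hR.toCurv.smul1, hS.toCurv.smul1]; ring
  · intro x y y' z w; rw [hR.toCurv.add2, hS.toCurv.add2]; ring
  · intro c x y z w; rw [hR.toCurv.smul2, hS.toCurv.smul2]; ring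
  · intro x y z z' w; rw [hR.toCurv.add3, hS.toCurv.add3]; ring
  · intro c x y z w; rw [hR.toCurv.smul3, hS.toCurv.smul3]; ring
  · intro x y z w w'; rw [hR.toCurv.add4, hS.toCurv.add4]; ring
  · intro c x y z w; rw [hR.toCurv.smul4, hS.toCurv.smul4]; ring
  · intro x y z w
    rw [hR.toCurv.antisym1 x y z w, hS.toCurv.antisym1 x y z w]; ring
  · intro x y z w
    rw [hR.toCurv.antisym2 x y z w, hS.toCurv.antisym2 x y z w]; ring
  · intro x y z w
    rw [hR.toCurv.pairsym x y z w, hS.toCurv.pairsym x y z w]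
  · intro x y z w
    have h1 := hR.toCurv.bianchi x y z w
    have h2 := hS.toCurv.bianchi x y z w
    linarith
  · intro x y z w; rw [hR.Jinv1, hS.Jinv1]
  · intro x y z w; rw [hR.Jinv2, hS.Jinv2]

lemma cneg1 {R : V → V → V → V → ℝ} (h : IsCurvatureTensor R) (x y z w : V) :
    R (-x) y z w = -R x y z w := by rw [← neg_one_smul ℝ x, h.smul1]; ring
lemma cneg2 {R : V → V → V → V → ℝ} (h : IsCurvatureTensor R) (x y z w : V) :
    R x (-y) z w = -R x y z w := by rw [← neg_one_smul ℝ y, h.smul2]; ring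
lemma cneg3 {R : V → V → V → V → ℝ} (h : IsCurvatureTensor R) (x y z w : V) :
    R x y (-z) w = -R x y z w := by rw [← neg_one_smul ℝ z, h.smul3]; ring
lemma cneg4 {R : V → V → V → V → ℝ} (h : IsCurvatureTensor R) (x y z w : V) :
    R x y z (-w) = -R x y z w := by rw [← neg_one_smul ℝ w, h.smul4]; ring

/-- Berger-type identity: sectional values of a Kähler curvature tensor are determined by
holomorphic sectional values. -/
lemma key_identity {R : V → V → V → V → ℝ} {J : V →ₗ[ℝ] V}
    (hK : IsKahlerCurvatureTensor J R) (hJ2 : ∀ v, J (J v) = -v) (u v : V) :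
    32 * R u v u v =
      -4 * R u (J u) u (J u) - 4 * R v (J v) v (J v)
      - R (u+v) (J (u+v)) (u+v) (J (u+v)) - R (u-v) (J (u-v)) (u-v) (J (u-v))
      + 3 * R (u + J v) (J (u + J v)) (u + J v) (J (u + J v))
      + 3 * R (u - J v) (J (u - J v)) (u - J v) (J (u - J v)) := by
  have hC := hK.toCurv
  have hS1 : ∀ x y z w, R (J x) y z w = -R x (J y) z w := by
    intro x y z w
    have h := hK.Jinv1 x (-(J y)) z w
    rw [map_neg, hJ2, neg_neg, cneg2 hC] at h
    exact h
  simp only [map_add, map_sub, map_neg, hJ2, sub_eq_add_neg, neg_neg, hC.add1, hC.add2, hC.add3,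
    hC.add4, cneg1 hC, cneg2 hC, cneg3 hC, cneg4 hC]
  linear_combination (14) * (hC.antisym2 u v (J u) (J v)) + (26) * (hC.pairsym u v (J u) (J v)) + (6) * (hC.bianchi u v (J u) (J v)) + (6) * (hC.pairsym u v (J v) (J u)) + (-2) * (hC.bianchi u v (J v) (J u)) + (6) * (hC.antisym2 u (J u) v (J v)) + (2) * (hC.pairsym u (J u) v (J v)) + (6) * (hC.pairsym u (J u) (J v) v) + (2) * (hC.pairsym u (J v) v (J u)) + (-2) * (hC.pairsym u (J v) (J u) v) + (-3) * (hC.antisym1 v v (J v) (J v)) + (6) * (hC.bianchi v v (J v) (J v)) + (2) * (hC.antisym1 v (J u) v (J u)) + (-6) * (hC.antisym1 v (J v) (J v) v) + (-3) * (hC.antisym1 (J u) (J u) (J v) (J v)) + (6) * (hC.bianchi (J u) (J u) (J v) (J v)) + (-6) * (hC.antisym1 (J u) (J v) (J v) (J u)) + (-26) * (hK.Jinv1 u v u v) + (2) * (hS1 u v u (J v)) + (-2) * (hS1 u v v (J u)) + (-6) * (hK.Jinv1 u v (J u) (J v))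

/-- Polarization: a curvature tensor is determined by its sectional values. -/
lemma polarization {R : V → V → V → V → ℝ} (hC : IsCurvatureTensor R) (x y z w : V) :
    6 * R x y z w =
      R x w x w + R z y z y - R x (y+w) x (y+w) - R z (y+w) z (y+w)
      - R (x+z) y (x+z) y - R (x+z) w (x+z) w + R (x+z) (y+w) (x+z) (y+w)
      - R x z x z + R x (y+z) x (y+z) - R w y w y + R w (y+z) w (y+z)
      + R (x+w) y (x+w) y + R (x+w) z (x+w) z - R (x+w) (y+z) (x+w) (y+z) := by
  simp only [hC.add1, hC.add2, hC.add3, hC.add4]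
  linear_combination (4) * (hC.antisym2 x y z w) + (-1) * (hC.pairsym x y z w) + (hC.pairsym x y w z) + (-2) * (hC.bianchi x y w z) + (2) * (hC.antisym2 x z y w) + (hC.pairsym x z w y) + (-1) * (hC.pairsym x w z y) + (-1/2) * (hC.antisym1 z z w w) + (hC.bianchi z z w w) + (-1) * (hC.antisym1 z w w z)

theorem statement14 : ∀ ε : ℝ, 0 < ε → ∀ n : ℕ, 1 ≤ n → ∃ η : ℝ, 0 < η ∧
    ∀ (V : Type) [NormedAddCommGroup V] [InnerProductSpace ℝ V],
    ∀ (b : OrthonormalBasis (Fin (2 * n)) ℝ V) (J : V →ₗ[ℝ] V),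
      (∀ v, J (J v) = -v) → (∀ v w : V, ⟪J v, J w⟫ = ⟪v, w⟫) →
      ∀ R : V → V → V → V → ℝ, IsKahlerCurvatureTensor J R →
      (∀ u : V, ‖u‖ = 1 → |R u (J u) u (J u) + 1| < η) →
      tensorNorm b (fun x y z w => R x y z w - R0 J x y z w) < ε := by
  intro ε hε n hn
  set η := ε / (300 * (2*(n:ℝ))^2 + 1) with hηdef
  have hη : 0 < η := by positivity
  refine ⟨η, hη, ?_⟩
  intro V _ _ b J hJ2 hJi R hK hH
  set T : V → V → V → V → ℝ := fun x y z w => R x y z w - R0 J x y z w with hTdef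
  have hK0 : IsKahlerCurvatureTensor J (R0 J) := R0_kahler hJ2 hJi
  have hT : IsKahlerCurvatureTensor J T := kahler_sub_s14 hK hK0
  -- bound on holomorphic sectional pinching for all vectors
  have hHb : ∀ p : V, |T p (J p) p (J p)| ≤ η * ‖p‖^4 := by
    intro p
    by_cases hp : p = 0
    · subst hp
      have h1 : R (0:V) 0 0 0 = 0 := by
        have := hK.toCurv.smul1 (0:ℝ) 0 0 0 0
        simpa using this
      have h2 : R0 J (0:V) 0 0 0 = 0 := by
        have := hK0.toCurv.smul1 (0:ℝ) 0 0 0 0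
        simpa using this
      simp [hTdef, h1, h2]
    · have hc : (0:ℝ) < ‖p‖ := norm_pos_iff.mpr hp
      set u : V := ‖p‖⁻¹ • p with hu_def
      have hu : ‖u‖ = 1 := norm_smul_inv_norm hp
      have e : ‖p‖ • u = p := smul_inv_smul₀ hc.ne' p
      have hR0u : R0 J u (J u) u (J u) = -1 := by
        rw [R0_hol hJ2 hJi u, hu]; norm_num
      have hdiff : |R u (J u) u (J u) - R0 J u (J u) u (J u)| ≤ η := by
        rw [hR0u, sub_neg_eq_add]
        exact (hH u hu).le
      have hsc : ∀ (S : V → V → V → V → ℝ), IsCurvatureTensor S →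
          S p (J p) p (J p) = ‖p‖^4 * S u (J u) u (J u) := by
        intro S hS
        conv_lhs => rw [← e]
        rw [map_smul, hS.smul1, hS.smul2, hS.smul3, hS.smul4]; ring
      simp only [hTdef]
      rw [hsc R hK.toCurv, hsc (R0 J) hK0.toCurv, ← mul_sub, abs_mul,
        abs_of_nonneg (by positivity : (0:ℝ) ≤ ‖p‖^4)]
      calc ‖p‖^4 * |R u (J u) u (J u) - R0 J u (J u) u (J u)|
          ≤ ‖p‖^4 * η := by
            exact mul_le_mul_of_nonneg_left hdiff (by positivity)
        _ = η * ‖p‖^4 := by ring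
  clear_value T
  -- bound on sectional values
  have hSb : ∀ a c : V, |T a c a c| ≤ 1/2 * η * (‖a‖ + ‖c‖)^4 := by
    intro a c
    have hgen : ∀ p : V, ‖p‖ ≤ ‖a‖ + ‖c‖ → |T p (J p) p (J p)| ≤ η * (‖a‖+‖c‖)^4 := by
      intro p hp
      refine le_trans (hHb p) ?_
      have h4 := pow_le_pow_left₀ (norm_nonneg p) hp 4
      exact mul_le_mul_of_nonneg_left h4 hη.le
    have hJc : ‖J c‖ = ‖c‖ := normJ hJi c
    have h1 := hgen a (by linarith [norm_nonneg c])
    have h2 := hgen c (by linarith [norm_nonneg a])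
    have h3 := hgen (a + c) (norm_add_le a c)
    have h4 := hgen (a - c) (norm_sub_le a c)
    have h5 := hgen (a + J c) (le_trans (norm_add_le a (J c)) (by rw [hJc]))
    have h6 := hgen (a - J c) (le_trans (norm_sub_le a (J c)) (by rw [hJc]))
    have hkey := key_identity hT hJ2 a c
    obtain ⟨l1, r1⟩ := abs_le.mp h1
    obtain ⟨l2, r2⟩ := abs_le.mp h2
    obtain ⟨l3, r3⟩ := abs_le.mp h3
    obtain ⟨l4, r4⟩ := abs_le.mp h4
    obtain ⟨l5, r5⟩ := abs_le.mp h5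
    obtain ⟨l6, r6⟩ := abs_le.mp h6
    rw [abs_le]
    constructor <;> linarith
  -- bound on the entries of T in the basis
  have hb1 : ∀ i : Fin (2*n), ‖b i‖ ≤ 2 := by
    intro i; rw [b.orthonormal.1 i]; norm_num
  have hb2 : ∀ i j : Fin (2*n), ‖b i + b j‖ ≤ 2 := by
    intro i j
    refine le_trans (norm_add_le _ _) ?_
    rw [b.orthonormal.1 i, b.orthonormal.1 j]; norm_num
  have hS128 : ∀ a c : V, ‖a‖ ≤ 2 → ‖c‖ ≤ 2 → |T a c a c| ≤ 128 * η := by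
    intro a c ha hc
    refine le_trans (hSb a c) ?_
    have hm : ‖a‖ + ‖c‖ ≤ 4 := by linarith
    have h4 : (‖a‖ + ‖c‖)^4 ≤ 4^4 := pow_le_pow_left₀ (by positivity) hm 4
    nlinarith [hη.le]
  have hEntry : ∀ i j k l : Fin (2*n), |T (b i) (b j) (b k) (b l)| ≤ 300 * η := by
    intro i j k l
    have pol := polarization hT.toCurv (b i) (b j) (b k) (b l)
    obtain ⟨m1, n1⟩ := abs_le.mp (hS128 (b i) (b l) (hb1 i) (hb1 l))
    obtain ⟨m2, n2⟩ := abs_le.mp (hS128 (b k) (b j) (hb1 k) (hb1 j))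
    obtain ⟨m3, n3⟩ := abs_le.mp (hS128 (b i) (b j + b l) (hb1 i) (hb2 j l))
    obtain ⟨m4, n4⟩ := abs_le.mp (hS128 (b k) (b j + b l) (hb1 k) (hb2 j l))
    obtain ⟨m5, n5⟩ := abs_le.mp (hS128 (b i + b k) (b j) (hb2 i k) (hb1 j))
    obtain ⟨m6, n6⟩ := abs_le.mp (hS128 (b i + b k) (b l) (hb2 i k) (hb1 l))
    obtain ⟨m7, n7⟩ := abs_le.mp (hS128 (b i + b k) (b j + b l) (hb2 i k) (hb2 j l))
    obtain ⟨m8, n8⟩ := abs_le.mp (hS128 (b i) (b k) (hb1 i) (hb1 k))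
    obtain ⟨m9, n9⟩ := abs_le.mp (hS128 (b i) (b j + b k) (hb1 i) (hb2 j k))
    obtain ⟨m10, n10⟩ := abs_le.mp (hS128 (b l) (b j) (hb1 l) (hb1 j))
    obtain ⟨m11, n11⟩ := abs_le.mp (hS128 (b l) (b j + b k) (hb1 l) (hb2 j k))
    obtain ⟨m12, n12⟩ := abs_le.mp (hS128 (b i + b l) (b j) (hb2 i l) (hb1 j))
    obtain ⟨m13, n13⟩ := abs_le.mp (hS128 (b i + b l) (b k) (hb2 i l) (hb1 k))
    obtain ⟨m14, n14⟩ := abs_le.mp (hS128 (b i + b l) (b j + b k) (hb2 i l) (hb2 j k))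
    rw [abs_le]
    constructor <;> linarith
  -- sum up
  have hcard : (∑ p : Fin (2*n) × Fin (2*n) × Fin (2*n) × Fin (2*n),
      (T (b p.1) (b p.2.1) (b p.2.2.1) (b p.2.2.2))^2) ≤ ((2*(n:ℝ))^2 * (300 * η))^2 := by
    have hsum : (∑ p : Fin (2*n) × Fin (2*n) × Fin (2*n) × Fin (2*n),
        (T (b p.1) (b p.2.1) (b p.2.2.1) (b p.2.2.2))^2) ≤
        ∑ _p : Fin (2*n) × Fin (2*n) × Fin (2*n) × Fin (2*n), (300 * η)^2 := by
      refine Finset.sum_le_sum fun p _ => ?_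
      have h := hEntry p.1 p.2.1 p.2.2.1 p.2.2.2
      calc (T (b p.1) (b p.2.1) (b p.2.2.1) (b p.2.2.2))^2
          = |T (b p.1) (b p.2.1) (b p.2.2.1) (b p.2.2.2)|^2 := (sq_abs _).symm
        _ ≤ (300 * η)^2 := pow_le_pow_left₀ (abs_nonneg _) h 2
    refine le_trans hsum ?_
    rw [Finset.sum_const, Finset.card_univ]
    simp only [Fintype.card_prod, Fintype.card_fin]
    rw [nsmul_eq_mul]
    push_cast
    ring_nf
    nlinarith [hη.le, sq_nonneg ((n:ℝ) * η)]
  have hfin : tensorNorm b T ≤ (2*(n:ℝ))^2 * (300 * η) := by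
    rw [tensorNorm]
    refine le_trans (Real.sqrt_le_sqrt hcard) ?_
    rw [Real.sqrt_sq (by positivity)]
  refine lt_of_le_of_lt hfin ?_
  have heq : (2*(n:ℝ))^2 * (300 * η) = (300 * (2*(n:ℝ))^2) * ε / (300 * (2*(n:ℝ))^2 + 1) := by
    rw [hηdef]; ring
  rw [heq, div_lt_iff₀ (by positivity)]
  nlinarith [sq_nonneg (2*(n:ℝ))]
end
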